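/- Let r, s be integers and define A by A_0 = r, A_1 = s, A_n = 6A_{n-1} - A_{n-2}. Then for all n ≥ 1, 32·A_n² + 2·(r² + s² - 6rs) = (r² - s²)·L_{2n-2} + (6s² - 2rs)·L_{2n-1}, where L_0 = 2, L_1 = 6, L_n = 6L_{n-1} - L_{n-2}. -/
import Mathlib


def L : ℕ → ℤ
  | 0 => 2
  | 1 => 6
  | (n+2) => 6 * L (n+1) - L n

def A (r s : ℤ) : ℕ → ℤ
  | 0 => r
  | 1 => s
  | (n+2) => 6 * A r s (n+1) - A r s n

lemma key (r s : ℤ) (m : ℕ) :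
    (32 * (A r s (m+1))^2 + 2 * (r^2 + s^2 - 6*r*s) =
      (r^2 - s^2) * L (2*m) + (6*s^2 - 2*r*s) * L (2*m+1)) ∧
    (32 * A r s (m+1) * A r s m + 6 * (r^2 + s^2 - 6*r*s) =
      (6*r^2 - 2*r*s) * L (2*m) + (s^2 - r^2) * L (2*m+1)) ∧
    (32 * (A r s m)^2 + 2 * (r^2 + s^2 - 6*r*s) =
      (35*r^2 + s^2 - 12*r*s) * L (2*m) + (2*r*s - 6*r^2) * L (2*m+1)) := by
  induction m with
  | zero => simp only [A, L]; refine ⟨by ring, by ring, by ring⟩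
  | succ m ih =>
    obtain ⟨hP, hQ, hR⟩ := ih
    have hA : A r s (m+2) = 6 * A r s (m+1) - A r s m := rfl
    have hL2 : L (2*(m+1)) = 6 * L (2*m+1) - L (2*m) := by
      have : 2*(m+1) = (2*m)+2 := by ring
      rw [this]; rfl
    have hL3 : L (2*(m+1)+1) = 6 * L (2*(m+1)) - L (2*m+1) := by
      have : 2*(m+1)+1 = (2*m+1)+2 := by ring
      rw [this]
      have : 2*(m+1) = (2*m+1)+1 := by ring
      rw [this]; rfl
    refine ⟨?_, ?_, ?_⟩
    · rw [hA, hL3, hL2]; linear_combination 36*hP - 12*hQ + hR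
    · rw [hA, hL3, hL2]; linear_combination 6*hP - hQ
    · rw [hL3, hL2]; linear_combination hP

theorem stmt13 (r s : ℤ) (n : ℕ) (hn : 1 ≤ n) :
    32 * (A r s n)^2 + 2 * (r^2 + s^2 - 6*r*s) =
      (r^2 - s^2) * L (2*n - 2) + (6*s^2 - 2*r*s) * L (2*n - 1) := by
  obtain ⟨m, rfl⟩ : ∃ m, n = m + 1 := ⟨n - 1, by omega⟩
  have h := (key r s m).1
  have e2 : 2*(m+1) - 2 = 2*m := by omega
  have e1 : 2*(m+1) - 1 = 2*m+1 := by omega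
  rw [e2, e1]
  exact h
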